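/- arXiv:2408.06615 — 5 statements merged into one kernel-verified Lean document; each statement's English description precedes it below -/
import Mathlib

section
/- Let p ∈ (0,1). For every ε > 0 there exists N* ∈ ℕ such that for every N ≥ N* there exist weights w_N^1, …, w_N^N ≥ 0 with ∑_{i=1}^N w_N^i = 1 and means μ_N^1, …, μ_N^N ∈ ℝ such that the Gaussian mixture ν_{0,N} = ∑_{i=1}^N w_N^i · N(μ_N^i, σ_N²) with uniform standard deviation σ_N = N^{−p} satisfies tv(ν₀, ν_{0,N}) ≤ ε, where ν₀ = N(0,1) is the standard normal distribution on ℝ. -/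
open MeasureTheory ProbabilityTheory Filter
open scoped NNReal ENNReal

/-- Total variation distance between two measures:
`tv(μ, ν) = sup_{A measurable} |μ(A) − ν(A)|`. -/
noncomputable def tvDist {α : Type*} [MeasurableSpace α] (μ ν : Measure α) : ℝ :=
  ⨆ s : {s : Set α // MeasurableSet s}, |(μ s.1).toReal - (ν s.1).toReal|

/-!
Write `N(0, 1) = N(0, 1 - v) ∗ N(0, v)` with `v = N^{-2p}`, i.e. `N(0, 1)` is the mixture of the
`N(y, v)` over `y ~ N(0, 1 - v)`. Rounding `y` down to a grid of mesh `δ = 2R/N` on `[-R, R)`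
turns this into a mixture of `N` Gaussians with variance `v`. Since
`tv(N(a, v), N(b, v)) ≤ |a - b| / √(2πv)`, rounding costs at most `δ / √(2πv) ≍ R N^{p-1}`
inside `[-R, R)`, and the mass outside is at most `1 / R²` by Chebyshev. Take `R` large, then
`N` large, using `p < 1`.
-/

open Real Set

lemma tvDist_le_of_forall_le_add {α : Type*} [MeasurableSpace α] {μ ν : Measure α}
    [IsFiniteMeasure μ] {c : ℝ} (hc : 0 ≤ c)
    (hμν : ∀ s, MeasurableSet s → μ s ≤ ν s + ENNReal.ofReal c)
    (hνμ : ∀ s, MeasurableSet s → ν s ≤ μ s + ENNReal.ofReal c) :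
    tvDist μ ν ≤ c := by
  have key {μ ν : Measure α} {s : Set α} (hν : ν s ≠ ∞) (h : μ s ≤ ν s + ENNReal.ofReal c) :
      (μ s).toReal - (ν s).toReal ≤ c := by
    rw [sub_le_iff_le_add', ← ENNReal.toReal_ofReal hc,
      ← ENNReal.toReal_add hν ENNReal.ofReal_ne_top]
    exact ENNReal.toReal_mono (by finiteness) h
  refine Real.iSup_le (fun ⟨s, hs⟩ ↦ ?_) hc
  have hνs : ν s ≠ ∞ := ((hνμ s hs).trans_lt (by finiteness)).ne
  exact abs_sub_le_iff.2 ⟨key hνs (hμν s hs), key (by finiteness) (hνμ s hs)⟩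

lemma conv_apply_eq_lintegral_map {M : Type*} [AddMonoid M] [MeasurableSpace M]
    [MeasurableAdd₂ M] {μ ν : Measure M} [SFinite ν] {s : Set M} (hs : MeasurableSet s) :
    (μ ∗ ν) s = ∫⁻ x, ν.map (x + ·) s ∂μ := by
  rw [← lintegral_indicator_one hs, Measure.lintegral_conv (measurable_one.indicator hs)]
  congr with x
  rw [Measure.map_apply (measurable_const_add x) hs,
    ← lintegral_indicator_one (measurable_const_add x hs)]
  rfl

lemma sum_map_singleton_smul_apply {α β ι : Type*} [MeasurableSpace α] [MeasurableSpace β]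
    [Fintype ι] [MeasurableSpace ι] [MeasurableSingletonClass ι] (ρ : Measure α) {r : α → ι}
    (hr : Measurable r) (P : ι → Measure β) (s : Set β) :
    (∑ i, ρ.map r {i} • P i) s = ∫⁻ y, P (r y) s ∂ρ := by
  rw [← lintegral_map (f := fun i ↦ P i s) (measurable_of_countable _) hr, lintegral_fintype,
    Measure.coe_finsetSum, Finset.sum_apply]
  simp_rw [Measure.smul_apply, smul_eq_mul, mul_comm]

lemma sum_toReal_map_singleton {α ι : Type*} [MeasurableSpace α] [Fintype ι] [MeasurableSpace ι]
    [MeasurableSingletonClass ι] (ρ : Measure α) [IsProbabilityMeasure ρ] {r : α → ι}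
    (hr : Measurable r) : ∑ i, (ρ.map r {i}).toReal = 1 := by
  have := Measure.isProbabilityMeasure_map (μ := ρ) hr.aemeasurable
  rw [← ENNReal.toReal_sum (fun i _ ↦ measure_ne_top _ _), sum_measure_singleton,
    Finset.coe_univ, measure_univ, ENNReal.toReal_one]

lemma gaussianReal_add_var_apply (m : ℝ) (w v : ℝ≥0) {s : Set ℝ} (hs : MeasurableSet s) :
    gaussianReal m (w + v) s = ∫⁻ y, gaussianReal y v s ∂gaussianReal m w := by
  rw [← add_zero m, ← gaussianReal_conv_gaussianReal, conv_apply_eq_lintegral_map hs]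
  simp_rw [gaussianReal_map_const_add, zero_add, add_zero]

section Gaussian

variable {v : ℝ≥0}

lemma gaussianPDFReal_le_inv_sqrt (m x : ℝ) :
    gaussianPDFReal m v x ≤ (√(2 * π * v))⁻¹ := by
  refine mul_le_of_le_one_right (by positivity) (exp_le_one_iff.2 ?_)
  exact div_nonpos_of_nonpos_of_nonneg (neg_nonpos.2 (sq_nonneg _)) (by positivity)

lemma gaussianPDFReal_le_gaussianPDFReal {a b x : ℝ} (h : (x - b) ^ 2 ≤ (x - a) ^ 2) :
    gaussianPDFReal a v x ≤ gaussianPDFReal b v x := by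
  unfold gaussianPDFReal
  gcongr

lemma gaussianReal_le_smul_volume (m : ℝ) (hv : v ≠ 0) :
    gaussianReal m v ≤ ENNReal.ofReal (√(2 * π * v))⁻¹ • volume := by
  rw [gaussianReal_of_var_ne_zero _ hv, ← withDensity_const]
  exact withDensity_mono (ae_of_all _ fun x ↦ ENNReal.ofReal_le_ofReal
    (gaussianPDFReal_le_inv_sqrt m x))

lemma gaussianReal_Ioc_le (m : ℝ) (hv : v ≠ 0) (c d : ℝ) :
    gaussianReal m v (Ioc c d) ≤ ENNReal.ofReal ((d - c) / √(2 * π * v)) := by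
  refine (gaussianReal_le_smul_volume m hv _).trans_eq ?_
  rw [Measure.smul_apply, Real.volume_Ioc, smul_eq_mul, ← ENNReal.ofReal_mul (by positivity),
    inv_mul_eq_div]

lemma gaussianReal_Iic_eq (a b c : ℝ) :
    gaussianReal a v (Iic c) = gaussianReal b v (Iic (c + (b - a))) := by
  have : gaussianReal b v = (gaussianReal a v).map (· + (b - a)) := by
    rw [gaussianReal_map_add_const, add_sub_cancel]
  rw [this, Measure.map_apply (measurable_add_const _) measurableSet_Iic, preimage_add_const_Iic,
    add_sub_cancel_right]

lemma gaussianReal_apply_le_add_of_le (s : Set ℝ) (hv : v ≠ 0) {a b : ℝ} (hab : a ≤ b) :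
    gaussianReal a v s ≤ gaussianReal b v s + ENNReal.ofReal ((b - a) / √(2 * π * v)) := by
  set c := (a + b) / 2 with hc
  set excess := (Iic c).indicator (fun x ↦ gaussianPDF a v x - gaussianPDF b v x) with hexcess
  -- The density of `gaussianReal a v` exceeds that of `gaussianReal b v` only left of `c`.
  have hpdf : ∀ x, gaussianPDF a v x ≤ gaussianPDF b v x + excess x := by
    intro x
    by_cases hx : x ≤ c
    · rw [hexcess, Set.indicator_of_mem (Set.mem_Iic.2 hx)]
      exact le_add_tsub
    · refine le_add_right (ENNReal.ofReal_le_ofReal (gaussianPDFReal_le_gaussianPDFReal ?_))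
      have hx' : 0 ≤ 2 * x - a - b := by linarith [not_le.1 hx]
      nlinarith [mul_nonneg (sub_nonneg.2 hab) hx']
  have hexcess_lintegral :
      ∫⁻ x, excess x = gaussianReal a v (Iic c) - gaussianReal b v (Iic c) := by
    rw [lintegral_indicator measurableSet_Iic, gaussianReal_apply _ hv, gaussianReal_apply _ hv]
    refine lintegral_sub (measurable_gaussianPDF _ _) ?_ ?_
    · exact gaussianReal_apply b hv _ ▸ measure_ne_top _ _
    · refine (ae_restrict_iff' measurableSet_Iic).2 (ae_of_all _ fun x hx ↦ ?_)
      refine ENNReal.ofReal_le_ofReal (gaussianPDFReal_le_gaussianPDFReal ?_)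
      have hx' : 0 ≤ a + b - 2 * x := by linarith [Set.mem_Iic.1 hx]
      nlinarith [mul_nonneg (sub_nonneg.2 hab) hx']
  calc gaussianReal a v s = ∫⁻ x in s, gaussianPDF a v x := gaussianReal_apply _ hv s
    _ ≤ ∫⁻ x in s, (gaussianPDF b v x + excess x) := lintegral_mono hpdf
    _ ≤ gaussianReal b v s + ∫⁻ x, excess x := by
        rw [lintegral_add_left (measurable_gaussianPDF _ _), gaussianReal_apply _ hv]
        exact add_le_add le_rfl (setLIntegral_le_lintegral _ _)
    _ = gaussianReal b v s + gaussianReal b v (Ioc c (c + (b - a))) := by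
        rw [hexcess_lintegral, gaussianReal_Iic_eq a b c,
          ← measure_sdiff (Iic_subset_Iic.2 (by linarith)) measurableSet_Iic.nullMeasurableSet
            (measure_ne_top _ _)]
        congr 2
        ext x
        simp [and_comm]
    _ ≤ _ := by
        gcongr
        exact (gaussianReal_Ioc_le b hv _ _).trans_eq (by ring_nf)

lemma gaussianReal_apply_le_add (s : Set ℝ) (hv : v ≠ 0) (a b : ℝ) :
    gaussianReal a v s ≤ gaussianReal b v s + ENNReal.ofReal (|a - b| / √(2 * π * v)) := by
  rcases le_total a b with hab | hba
  · rw [abs_sub_comm, abs_of_nonneg (sub_nonneg.2 hab)]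
    exact gaussianReal_apply_le_add_of_le s hv hab
  · have hneg (m : ℝ) : gaussianReal m v s = gaussianReal (-m) v (Neg.neg ⁻¹' s) := by
      rw [← gaussianReal_map_neg, show (fun x : ℝ ↦ -x) = MeasurableEquiv.neg ℝ from rfl,
        MeasurableEquiv.map_apply]
      simp
    rw [abs_of_nonneg (sub_nonneg.2 hba), hneg a, hneg b]
    exact (gaussianReal_apply_le_add_of_le _ hv (neg_le_neg hba)).trans_eq (by ring_nf)

lemma lintegral_gaussianReal_le_add {ρ : Measure ℝ} [IsProbabilityMeasure ρ] (hv : v ≠ 0)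
    {f g : ℝ → ℝ} {K : Set ℝ} (hK : MeasurableSet K) {δ : ℝ} (hfg : ∀ y ∈ K, |f y - g y| ≤ δ)
    (s : Set ℝ) :
    ∫⁻ y, gaussianReal (f y) v s ∂ρ
      ≤ ∫⁻ y, gaussianReal (g y) v s ∂ρ + (ENNReal.ofReal (δ / √(2 * π * v)) + ρ Kᶜ) := by
  have hpt : ∀ y, gaussianReal (f y) v s
      ≤ gaussianReal (g y) v s + (ENNReal.ofReal (δ / √(2 * π * v)) + Kᶜ.indicator 1 y) := by
    intro y
    by_cases hy : y ∈ K
    · refine (gaussianReal_apply_le_add s hv _ _).trans (add_le_add le_rfl (le_add_right ?_))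
      gcongr
      exact hfg y hy
    · rw [indicator_of_mem (mem_compl hy), Pi.one_apply]
      exact prob_le_one.trans (le_add_left (le_add_left le_rfl))
  calc ∫⁻ y, gaussianReal (f y) v s ∂ρ ≤ ∫⁻ y, (gaussianReal (g y) v s
        + (ENNReal.ofReal (δ / √(2 * π * v)) + Kᶜ.indicator 1 y)) ∂ρ := lintegral_mono hpt
    _ = _ := by
      rw [lintegral_add_right _ ((measurable_one.indicator hK.compl).const_add _),
        lintegral_add_left measurable_const, lintegral_const, measure_univ, mul_one,
        lintegral_indicator_one hK.compl]

lemma gaussianReal_zero_compl_Ioo_le (w : ℝ≥0) {R : ℝ} (hR : 0 < R) :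
    gaussianReal 0 w (Ioo (-R) R)ᶜ ≤ ENNReal.ofReal (w / R ^ 2) := by
  have hcheb := meas_ge_le_variance_div_sq (memLp_id_gaussianReal (μ := 0) (v := w) 2) hR
  simp only [variance_id_gaussianReal, id, integral_id_gaussianReal, sub_zero] at hcheb
  refine (measure_mono fun y hy ↦ ?_).trans hcheb
  simp only [mem_compl_iff, mem_Ioo, not_and_or, not_lt] at hy
  simp only [mem_ofPred_eq, le_abs]
  exact hy.elim (fun h ↦ Or.inr (by linarith)) Or.inl

end Gaussian

/-- Outside `[a, a + Nδ)` the index is reduced mod `N` and carries no meaning. -/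
noncomputable def gridIndex (a δ : ℝ) (N : ℕ) [NeZero N] (y : ℝ) : Fin N :=
  Fin.ofNat N ⌊(y - a) / δ⌋₊

lemma measurable_gridIndex (a δ : ℝ) (N : ℕ) [NeZero N] : Measurable (gridIndex a δ N) :=
  (measurable_from_nat (f := Fin.ofNat N)).comp
    (Nat.measurable_floor.comp ((measurable_sub_const a).div_const δ))

lemma abs_sub_gridIndex_le {a δ y : ℝ} {N : ℕ} [NeZero N] (hδ : 0 < δ) (hay : a ≤ y)
    (hy : y < a + N * δ) : |y - (a + (gridIndex a δ N y : ℕ) * δ)| ≤ δ := by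
  set t := (y - a) / δ
  have ht0 : 0 ≤ t := div_nonneg (sub_nonneg.2 hay) hδ.le
  have htN : t < N := by rwa [div_lt_iff₀ hδ, sub_lt_iff_lt_add']
  have hidx : ((gridIndex a δ N y : ℕ) : ℝ) = ⌊t⌋₊ := by
    rw [gridIndex, Fin.val_ofNat, Nat.mod_eq_of_lt ((Nat.floor_lt ht0).2 htN)]
  have hlow : (⌊t⌋₊ : ℝ) * δ ≤ y - a := (le_div_iff₀ hδ).1 (Nat.floor_le ht0)
  have hupp : y - a < (⌊t⌋₊ + 1) * δ := (div_lt_iff₀ hδ).1 (Nat.lt_floor_add_one t)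
  rw [hidx, abs_le]
  constructor <;> nlinarith

theorem exists_gaussianMixture_tvDist_le (N : ℕ) [NeZero N] {v : ℝ≥0} (hv0 : v ≠ 0)
    (hv1 : v ≤ 1) {R : ℝ} (hR : 0 < R) :
    ∃ w μ : Fin N → ℝ, (∀ i, 0 ≤ w i) ∧ ∑ i, w i = 1 ∧
      tvDist (gaussianReal 0 1) (∑ i, ENNReal.ofReal (w i) • gaussianReal (μ i) v)
        ≤ 2 * R / N / √(2 * π * v) + 1 / R ^ 2 := by
  set δ := 2 * R / N
  set ρ := gaussianReal 0 (1 - v)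
  set r := gridIndex (-R) δ N
  set x : Fin N → ℝ := fun i ↦ -R + (i : ℕ) * δ
  have hδ : 0 < δ := div_pos (by positivity) (Nat.cast_pos.2 (NeZero.pos N))
  have hr : Measurable r := measurable_gridIndex _ _ _
  refine ⟨fun i ↦ (ρ.map r {i}).toReal, x, fun i ↦ ENNReal.toReal_nonneg,
    sum_toReal_map_singleton ρ hr, ?_⟩
  have hmix (s : Set ℝ) : (∑ i, ENNReal.ofReal (ρ.map r {i}).toReal • gaussianReal (x i) v) s
      = ∫⁻ y, gaussianReal (x (r y)) v s ∂ρ := by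
    simp_rw [ENNReal.ofReal_toReal (measure_ne_top _ _)]
    exact sum_map_singleton_smul_apply ρ hr _ s
  have hstd {s : Set ℝ} (hs : MeasurableSet s) :
      gaussianReal 0 1 s = ∫⁻ y, gaussianReal y v s ∂ρ := by
    rw [← gaussianReal_add_var_apply _ _ _ hs, tsub_add_cancel_of_le hv1]
  have hround : ∀ y ∈ Ioo (-R) R, |y - x (r y)| ≤ δ := fun y hy ↦
    abs_sub_gridIndex_le hδ hy.1.le (by
      rw [mul_div_cancel₀ _ (NeZero.ne (N : ℝ))]; linarith [hy.2])
  have herr : ENNReal.ofReal (δ / √(2 * π * v)) + ρ (Ioo (-R) R)ᶜ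
      ≤ ENNReal.ofReal (δ / √(2 * π * v) + 1 / R ^ 2) := by
    rw [ENNReal.ofReal_add (by positivity) (by positivity)]
    refine add_le_add le_rfl ((gaussianReal_zero_compl_Ioo_le _ hR).trans ?_)
    gcongr
    exact_mod_cast tsub_le_self
  refine tvDist_le_of_forall_le_add (by positivity) (fun s hs ↦ ?_) (fun s hs ↦ ?_)
  · rw [hstd hs, hmix]
    exact (lintegral_gaussianReal_le_add hv0 measurableSet_Ioo hround s).trans
      (add_le_add le_rfl herr)
  · rw [hstd hs, hmix]
    refine (lintegral_gaussianReal_le_add hv0 measurableSet_Ioo (fun y hy ↦ ?_) s).trans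
      (add_le_add le_rfl herr)
    exact (abs_sub_comm _ _).trans_le (hround y hy)

lemma tendsto_div_sqrt_mul_rpow_neg {p : ℝ} (hp : p < 1) (C : ℝ) :
    Tendsto (fun N : ℕ ↦ C / N / √(2 * π * ((N : ℝ≥0) ^ (-(2 * p)) : ℝ≥0))) atTop (nhds 0) := by
  have hlim : Tendsto (fun N : ℕ ↦ C / √(2 * π) * (N : ℝ) ^ (p - 1)) atTop (nhds 0) := by
    simpa using ((tendsto_rpow_neg_atTop (by linarith : 0 < 1 - p)).comp
      tendsto_natCast_atTop_atTop).const_mul (C / √(2 * π))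
  refine hlim.congr' ((eventually_ge_atTop 1).mono fun N hN ↦ ?_)
  have hN : (0 : ℝ) < N := by exact_mod_cast hN
  have hsqrt : √((N : ℝ) ^ (-(2 * p))) = (N : ℝ) ^ (-p) := by
    rw [sqrt_eq_rpow, ← rpow_mul hN.le]
    ring_nf
  dsimp only
  rw [NNReal.coe_rpow, NNReal.coe_natCast, sqrt_mul' _ (rpow_nonneg hN.le _), hsqrt,
    rpow_sub_one hN.ne', rpow_neg hN.le]
  field_simp

/-- For `p ∈ (0,1)` and every `ε > 0` there is `N*` such that for every `N ≥ N*` there are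
nonnegative weights summing to one and means such that the Gaussian mixture with uniform
standard deviation `σ_N = N^{-p}` (variance `N^{-2p}`) approximates the standard normal
distribution to within `ε` in total variation distance. -/
theorem gaussian_mixture_tv_approx (p : ℝ) (hp : p ∈ Set.Ioo (0 : ℝ) 1) :
    ∀ ε > 0, ∃ Nstar : ℕ, ∀ N ≥ Nstar,
      ∃ w μ : Fin N → ℝ, (∀ i, 0 ≤ w i) ∧ (∑ i, w i = 1) ∧
        tvDist (gaussianReal 0 1)
          (∑ i, ENNReal.ofReal (w i) • gaussianReal (μ i) ((N : ℝ≥0) ^ (-(2 * p)))) ≤ ε := by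
  intro ε hε
  set R := √(2 / ε)
  have hR : 0 < R := by positivity
  have htail : 1 / R ^ 2 = ε / 2 := by
    rw [sq_sqrt (by positivity)]
    field_simp
  obtain ⟨Nstar, hNstar⟩ := eventually_atTop.1
    (((tendsto_div_sqrt_mul_rpow_neg hp.2 (2 * R)).eventually (ge_mem_nhds (half_pos hε))).and
      (eventually_ge_atTop 1))
  refine ⟨Nstar, fun N hN ↦ ?_⟩
  obtain ⟨hsmall, hN1⟩ := hNstar N hN
  have : NeZero N := ⟨by omega⟩
  have hv0 : (N : ℝ≥0) ^ (-(2 * p)) ≠ 0 := by simp [NNReal.rpow_eq_zero_iff, NeZero.ne N]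
  have hv1 : (N : ℝ≥0) ^ (-(2 * p)) ≤ 1 :=
    NNReal.rpow_le_one_of_one_le_of_nonpos (by exact_mod_cast hN1) (by linarith [hp.1])
  obtain ⟨w, μ, hw0, hw1, htv⟩ := exists_gaussianMixture_tvDist_le N hv0 hv1 hR
  exact ⟨w, μ, hw0, hw1, htv.trans (by linarith)⟩
end

section
/- Let ν and ν_1, …, ν_{N} be probability measures on a measurable space, let w_1, …, w_N ≥ 0 with ∑_i w_i = 1, and set ν_mix = ∑_{i=1}^N w_i ν_i. Let Q be a measurable real-valued function with finite second moments under ν and under each ν_i, and let Q_{s,1}, …, Q_{s,N} be measurable real-valued functions with Q_{s,i} integrable with respect to ν_i. Then |E_ν[Q] − ∑_{i=1}^N w_i E_{ν_i}[Q_{s,i}]| ≤ 2 (E_ν[Q²] + E_{ν_mix}[Q²])^{1/2} · tv(ν, ν_mix)^{1/2} + ∑_{i=1}^N w_i |E_{ν_i}[Q] − E_{ν_i}[Q_{s,i}]|. -/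
/-!
For finite measures the Jordan decomposition gives `μ + (ν - μ) = ν + (μ - ν)`, where the
truncated differences `μ - ν` and `ν - μ` live on the two sides of a Hahn set, so each has total
mass at most `tv(μ, ν)`. Hence `E_μ[Q] - E_ν[Q] = ∫ Q d(μ - ν) - ∫ Q d(ν - μ)`, and Cauchy–Schwarz
together with `μ - ν ≤ μ` bounds `|∫ Q d(μ - ν)|` by `E_μ[Q²]^{1/2} tv(μ, ν)^{1/2}`. Applied to `ν`
and `ν_mix`, whose moments are the weighted moments of the components, this bounds
`|E_ν[Q] - ∑ᵢ wᵢ E_{νᵢ}[Q]|`; the rest is the triangle inequality for the weighted Taylor errors.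
-/

open MeasureTheory
open scoped NNReal ENNReal

section TotalVariation

variable {α : Type*} [MeasurableSpace α]

lemma tvDist_comm (μ ν : Measure α) : tvDist μ ν = tvDist ν μ := by
  simp only [tvDist, abs_sub_comm]

variable {μ ν : Measure α} [IsFiniteMeasure μ] [IsFiniteMeasure ν]

lemma abs_measureReal_sub_le_tvDist {s : Set α} (hs : MeasurableSet s) :
    |μ.real s - ν.real s| ≤ tvDist μ ν := by
  refine le_ciSup (f := fun s : {s : Set α // MeasurableSet s} => |μ.real s - ν.real s|)
    ⟨μ.real Set.univ + ν.real Set.univ, ?_⟩ ⟨s, hs⟩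
  rintro _ ⟨t, rfl⟩
  exact (abs_sub _ _).trans <| by
    simp only [abs_of_nonneg measureReal_nonneg]
    gcongr <;> simp

lemma Measure.add_sub_eq_add_sub : μ + (ν - μ) = ν + (μ - ν) := by
  rw [← Measure.toSignedMeasure_eq_toSignedMeasure_iff, Measure.toSignedMeasure_add,
    Measure.toSignedMeasure_add, add_comm ν.toSignedMeasure, ← sub_eq_sub_iff_add_eq_add,
    Measure.sub_toSignedMeasure_eq_toSignedMeasure_sub]

lemma measureReal_sub_univ_le_tvDist : (μ - ν).real Set.univ ≤ tvDist μ ν := by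
  obtain ⟨s, hs⟩ := exists_isHahnDecomposition μ ν
  have h_split : (μ + (ν - μ)).real sᶜ = (ν + (μ - ν)).real sᶜ := by
    rw [Measure.add_sub_eq_add_sub]
  rw [measureReal_add_apply, measureReal_add_apply] at h_split
  have hs0 : (μ - ν).real s = 0 := by
    simp [Measure.real, Measure.sub_apply_eq_zero_of_isHahnDecomposition hs]
  have hsc0 : (ν - μ).real sᶜ = 0 := by
    simp [Measure.real, Measure.sub_apply_eq_zero_of_isHahnDecomposition hs.compl]
  have := abs_measureReal_sub_le_tvDist (μ := μ) (ν := ν) hs.measurableSet.compl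
  rw [← measureReal_add_measureReal_compl hs.measurableSet, hs0]
  linarith [le_abs_self (μ.real sᶜ - ν.real sᶜ)]

end TotalVariation

lemma abs_integral_le_sqrt_integral_sq_mul_sqrt_measureReal_univ {α : Type*}
    [MeasurableSpace α] {σ : Measure α} [IsFiniteMeasure σ] {Q : α → ℝ} (hQ : MemLp Q 2 σ) :
    |∫ x, Q x ∂σ| ≤ √(∫ x, Q x ^ 2 ∂σ) * √(σ.real Set.univ) := by
  have h_holder := integral_mul_le_Lp_mul_Lq_of_nonneg Real.HolderConjugate.two_two
    (.of_forall fun x => abs_nonneg (Q x)) (.of_forall fun _ => zero_le_one)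
    (by rw [ENNReal.ofReal_ofNat]; exact hQ.abs) (memLp_const (1 : ℝ))
  simp only [mul_one, Real.rpow_two, sq_abs, one_pow, integral_const, smul_eq_mul] at h_holder
  rw [Real.sqrt_eq_rpow, Real.sqrt_eq_rpow]
  exact abs_integral_le_integral_abs.trans h_holder

section MeanDifference

variable {α : Type*} [MeasurableSpace α] {μ ν : Measure α} [IsFiniteMeasure μ]
  [IsFiniteMeasure ν] {Q : α → ℝ}

lemma abs_integral_measure_sub_le (hQ : MemLp Q 2 μ) :
    |∫ x, Q x ∂(μ - ν)| ≤ √(∫ x, Q x ^ 2 ∂μ) * √(tvDist μ ν) := by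
  refine (abs_integral_le_sqrt_integral_sq_mul_sqrt_measureReal_univ
    (hQ.mono_measure Measure.sub_le)).trans ?_
  exact mul_le_mul (Real.sqrt_le_sqrt (integral_mono_measure Measure.sub_le
      (.of_forall fun x => sq_nonneg (Q x)) hQ.integrable_sq))
    (Real.sqrt_le_sqrt measureReal_sub_univ_le_tvDist) (Real.sqrt_nonneg _) (Real.sqrt_nonneg _)

lemma integral_sub_integral_eq_integral_measure_sub (hμ : Integrable Q μ) (hν : Integrable Q ν) :
    ∫ x, Q x ∂μ - ∫ x, Q x ∂ν = ∫ x, Q x ∂(μ - ν) - ∫ x, Q x ∂(ν - μ) := by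
  have h : ∫ x, Q x ∂(μ + (ν - μ)) = ∫ x, Q x ∂(ν + (μ - ν)) := by
    rw [Measure.add_sub_eq_add_sub]
  rw [integral_add_measure hμ (hν.mono_measure Measure.sub_le),
    integral_add_measure hν (hμ.mono_measure Measure.sub_le)] at h
  linarith

/-- The factor `2` absorbs `√A + √B ≤ 2 √(A + B)`. -/
theorem abs_integral_sub_integral_le_two_mul_sqrt_tvDist (hμ : MemLp Q 2 μ) (hν : MemLp Q 2 ν) :
    |∫ x, Q x ∂μ - ∫ x, Q x ∂ν| ≤
      2 * √(∫ x, Q x ^ 2 ∂μ + ∫ x, Q x ^ 2 ∂ν) * √(tvDist μ ν) := by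
  have hA : 0 ≤ ∫ x, Q x ^ 2 ∂μ := integral_nonneg fun x => sq_nonneg (Q x)
  have hB : 0 ≤ ∫ x, Q x ^ 2 ∂ν := integral_nonneg fun x => sq_nonneg (Q x)
  have h_μν := abs_integral_measure_sub_le (ν := ν) hμ
  have h_νμ := abs_integral_measure_sub_le (ν := μ) hν
  rw [tvDist_comm] at h_νμ
  rw [integral_sub_integral_eq_integral_measure_sub (hμ.integrable one_le_two)
    (hν.integrable one_le_two)]
  calc _ ≤ |∫ x, Q x ∂(μ - ν)| + |∫ x, Q x ∂(ν - μ)| := abs_sub _ _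
    _ ≤ √(∫ x, Q x ^ 2 ∂μ + ∫ x, Q x ^ 2 ∂ν) * √(tvDist μ ν)
        + √(∫ x, Q x ^ 2 ∂μ + ∫ x, Q x ^ 2 ∂ν) * √(tvDist μ ν) := by
      gcongr
      · exact h_μν.trans (by gcongr; linarith)
      · exact h_νμ.trans (by gcongr; linarith)
    _ = _ := by ring

end MeanDifference

section Mixture

variable {α ι : Type*} [MeasurableSpace α] [Fintype ι] {νc : ι → Measure α} {w : ι → ℝ}
  {f : α → ℝ}

lemma isFiniteMeasure_sum_ofReal_smul [∀ i, IsFiniteMeasure (νc i)] :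
    IsFiniteMeasure (∑ i, ENNReal.ofReal (w i) • νc i) := by
  constructor
  simp [Measure.finsetSum_apply, ENNReal.sum_lt_top, ENNReal.mul_lt_top]

lemma integrable_sum_ofReal_smul (hf : ∀ i, Integrable f (νc i)) :
    Integrable f (∑ i, ENNReal.ofReal (w i) • νc i) :=
  integrable_finsetSum_measure.mpr fun i _ => (hf i).smul_measure ENNReal.ofReal_ne_top

lemma integral_sum_ofReal_smul (hw : ∀ i, 0 ≤ w i) (hf : ∀ i, Integrable f (νc i)) :
    ∫ x, f x ∂(∑ i, ENNReal.ofReal (w i) • νc i) = ∑ i, w i * ∫ x, f x ∂(νc i) := by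
  rw [integral_finsetSum_measure fun i _ => (hf i).smul_measure ENNReal.ofReal_ne_top]
  simp only [integral_smul_measure, ENNReal.toReal_ofReal (hw _), smul_eq_mul]

lemma memLp_two_sum_ofReal_smul [∀ i, IsFiniteMeasure (νc i)] (hf : ∀ i, MemLp f 2 (νc i)) :
    MemLp f 2 (∑ i, ENNReal.ofReal (w i) • νc i) :=
  (memLp_two_iff_integrable_sq
    (integrable_sum_ofReal_smul fun i => (hf i).integrable one_le_two).aestronglyMeasurable).mpr
    (integrable_sum_ofReal_smul fun i => (hf i).integrable_sq)

end Mixture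

theorem mixture_taylor_mean_error_general {α : Type*} [MeasurableSpace α]
    (ν : Measure α) [IsProbabilityMeasure ν] (N : ℕ)
    (νc : Fin N → Measure α) [∀ i, IsProbabilityMeasure (νc i)]
    (w : Fin N → ℝ) (hw : ∀ i, 0 ≤ w i)
    (Q : α → ℝ) (Qs : Fin N → α → ℝ)
    (hQ : MemLp Q 2 ν) (hQi : ∀ i, MemLp Q 2 (νc i)) :
    |(∫ x, Q x ∂ν) - ∑ i, w i * ∫ x, Qs i x ∂(νc i)| ≤
      2 * Real.sqrt ((∫ x, Q x ^ 2 ∂ν) + ∑ i, w i * ∫ x, Q x ^ 2 ∂(νc i)) *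
        Real.sqrt (tvDist ν (∑ i, ENNReal.ofReal (w i) • νc i)) +
      ∑ i, w i * |(∫ x, Q x ∂(νc i)) - ∫ x, Qs i x ∂(νc i)| := by
  have := isFiniteMeasure_sum_ofReal_smul (w := w) (νc := νc)
  have h_tv := abs_integral_sub_integral_le_two_mul_sqrt_tvDist hQ
    (memLp_two_sum_ofReal_smul (w := w) hQi)
  rw [integral_sum_ofReal_smul hw fun i => (hQi i).integrable_sq,
    integral_sum_ofReal_smul hw fun i => (hQi i).integrable one_le_two] at h_tv
  have h_split : (∫ x, Q x ∂ν) - ∑ i, w i * ∫ x, Qs i x ∂(νc i) =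
      ((∫ x, Q x ∂ν) - ∑ i, w i * ∫ x, Q x ∂(νc i)) +
        ∑ i, w i * ((∫ x, Q x ∂(νc i)) - ∫ x, Qs i x ∂(νc i)) := by
    simp only [mul_sub, Finset.sum_sub_distrib]
    ring
  rw [h_split]
  refine (abs_add_le _ _).trans (add_le_add h_tv ((Finset.abs_sum_le_sum_abs _ _).trans_eq ?_))
  simp only [abs_mul, abs_of_nonneg (hw _)]

/-- Error bound for the mixture Taylor approximation of the mean:
`|E_ν[Q] − ∑ᵢ wᵢ E_{νᵢ}[Q_{s,i}]|
  ≤ 2 (E_ν[Q²] + E_{ν_mix}[Q²])^{1/2} tv(ν, ν_mix)^{1/2} + ∑ᵢ wᵢ |E_{νᵢ}[Q] − E_{νᵢ}[Q_{s,i}]|`,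
where `ν_mix = ∑ᵢ wᵢ νᵢ` and `E_{ν_mix}[Q²] = ∑ᵢ wᵢ E_{νᵢ}[Q²]`. -/
theorem mixture_taylor_mean_error {α : Type*} [MeasurableSpace α]
    (ν : Measure α) [IsProbabilityMeasure ν] (N : ℕ)
    (νc : Fin N → Measure α) [∀ i, IsProbabilityMeasure (νc i)]
    (w : Fin N → ℝ) (hw : ∀ i, 0 ≤ w i) (hw1 : ∑ i, w i = 1)
    (Q : α → ℝ) (Qs : Fin N → α → ℝ)
    (hQ : MemLp Q 2 ν) (hQi : ∀ i, MemLp Q 2 (νc i))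
    (hQs : ∀ i, Integrable (Qs i) (νc i)) :
    |(∫ x, Q x ∂ν) - ∑ i, w i * ∫ x, Qs i x ∂(νc i)| ≤
      2 * Real.sqrt ((∫ x, Q x ^ 2 ∂ν) + ∑ i, w i * ∫ x, Q x ^ 2 ∂(νc i)) *
        Real.sqrt (tvDist ν (∑ i, ENNReal.ofReal (w i) • νc i)) +
      ∑ i, w i * |(∫ x, Q x ∂(νc i)) - ∫ x, Qs i x ∂(νc i)| :=
  mixture_taylor_mean_error_general ν N νc w hw Q Qs hQ hQi
end

section
/- Let α ∈ (0,1). Let ν and ν_1, …, ν_N be probability measures on a measurable space, let w_1, …, w_N ≥ 0 with ∑_i w_i = 1, and set ν_mix = ∑_{i=1}^N w_i ν_i. Let Q be a measurable real-valued function with finite second moments under ν and under ν_mix, and let Q_{s,1}, …, Q_{s,N} be measurable real-valued functions with |Q − Q_{s,i}| and |Q_{s,i}| integrable with respect to each ν_i. Suppose both minima CVaR_α^ν[Q] = min_{t∈ℝ} ( t + (1−α)^{-1} E_ν[(Q−t)^+] ) and Ĉ_α = min_{t∈ℝ} ( t + (1−α)^{-1} ∑_{i=1}^N w_i E_{ν_i}[(Q_{s,i}−t)^+]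 ) are attained. Then |CVaR_α^ν[Q] − Ĉ_α| ≤ (1−α)^{-1} ( 2 (E_ν[Q²] + E_{ν_mix}[Q²])^{1/2} · tv(ν, ν_mix)^{1/2} + ∑_{i=1}^N w_i E_{ν_i}[|Q − Q_{s,i}|] ). -/
/-!
For each `t` the two objectives differ by `(1 - α)⁻¹` times
`E_ν[(Q - t)⁺] - ∑ᵢ wᵢ E_{νᵢ}[(Q_{s,i} - t)⁺]`. Inserting `E_{ν_mix}[(Q - t)⁺]` splits this into a
change of measure and a change of integrand. For the first, write `ν - ν_mix = d • (ν + ν_mix)`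
with `|d| ≤ 1` and `∫ |d| ≤ 2 tv(ν, ν_mix)`; Cauchy–Schwarz against an integrand dominated by `|Q|`
gives the square-root term. The second is bounded because `x ↦ (x - t)⁺` is
`1`-Lipschitz. A uniform bound on the difference of two functions bounds the difference of their
minima.
-/

open MeasureTheory

lemma integral_abs_mul_abs_le_sqrt_mul_sqrt {Ω : Type*} [MeasurableSpace Ω] {μ : Measure Ω}
    {f g : Ω → ℝ} (hf : MemLp f 2 μ) (hg : MemLp g 2 μ) :
    ∫ x, |f x| * |g x| ∂μ ≤ √(∫ x, f x ^ 2 ∂μ) * √(∫ x, g x ^ 2 ∂μ) := by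
  have holder := integral_mul_le_Lp_mul_Lq_of_nonneg Real.HolderConjugate.two_two
    (Filter.Eventually.of_forall fun x => abs_nonneg (f x))
    (Filter.Eventually.of_forall fun x => abs_nonneg (g x))
    (by simpa using hf.norm) (by simpa using hg.norm)
  simpa only [Real.rpow_two, sq_abs, ← Real.sqrt_eq_rpow] using holder

section SignedDensity

variable {Ω : Type*} [MeasurableSpace Ω] {μ ν : Measure Ω}

/-- The density of `μ - ν` with respect to `μ + ν`. -/
noncomputable def signedDensity (μ ν : Measure Ω) (x : Ω) : ℝ :=
  (μ.rnDeriv (μ + ν) x).toReal - (ν.rnDeriv (μ + ν) x).toReal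

lemma measurable_signedDensity : Measurable (signedDensity μ ν) :=
  (μ.measurable_rnDeriv _).ennreal_toReal.sub (ν.measurable_rnDeriv _).ennreal_toReal

section SigmaFinite

variable [SigmaFinite μ] [SigmaFinite ν]

lemma toReal_rnDeriv_add_toReal_rnDeriv :
    ∀ᵐ x ∂(μ + ν), (μ.rnDeriv (μ + ν) x).toReal + (ν.rnDeriv (μ + ν) x).toReal = 1 := by
  filter_upwards [μ.rnDeriv_add' ν (μ + ν), (μ + ν).rnDeriv_self,
    μ.rnDeriv_lt_top (μ + ν), ν.rnDeriv_lt_top (μ + ν)] with x hadd hself hμ hν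
  rw [← ENNReal.toReal_add hμ.ne hν.ne, ← Pi.add_apply, ← hadd, hself, ENNReal.toReal_one]

lemma abs_signedDensity_le_one : ∀ᵐ x ∂(μ + ν), |signedDensity μ ν x| ≤ 1 := by
  filter_upwards [toReal_rnDeriv_add_toReal_rnDeriv] with x hx
  rw [signedDensity, abs_sub_le_iff]
  constructor <;> linarith [ENNReal.toReal_nonneg (a := μ.rnDeriv (μ + ν) x),
    ENNReal.toReal_nonneg (a := ν.rnDeriv (μ + ν) x)]

lemma integral_sub_integral_eq_integral_signedDensity_mul {h : Ω → ℝ}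
    (hμ : Integrable h μ) (hν : Integrable h ν) :
    ∫ x, h x ∂μ - ∫ x, h x ∂ν = ∫ x, signedDensity μ ν x * h x ∂(μ + ν) := by
  have hμξ : μ ≪ μ + ν := Measure.AbsolutelyContinuous.rfl.add_right ν
  have hνξ : ν ≪ μ + ν := Measure.AbsolutelyContinuous.rfl.add_right' μ
  simp only [signedDensity, sub_mul]
  rw [integral_sub ((integrable_toReal_rnDeriv_mul_iff hμξ).2 hμ)
      ((integrable_toReal_rnDeriv_mul_iff hνξ).2 hν),
    integral_toReal_rnDeriv_mul hμξ, integral_toReal_rnDeriv_mul hνξ]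

end SigmaFinite

variable [IsFiniteMeasure μ] [IsFiniteMeasure ν]

lemma integrable_signedDensity : Integrable (signedDensity μ ν) (μ + ν) :=
  Measure.integrable_toReal_rnDeriv.sub Measure.integrable_toReal_rnDeriv

lemma setIntegral_signedDensity (s : Set Ω) :
    ∫ x in s, signedDensity μ ν x ∂(μ + ν) = μ.real s - ν.real s := by
  have hμξ : μ ≪ μ + ν := Measure.AbsolutelyContinuous.rfl.add_right ν
  have hνξ : ν ≪ μ + ν := Measure.AbsolutelyContinuous.rfl.add_right' μ
  simp only [signedDensity]
  rw [integral_sub Measure.integrable_toReal_rnDeriv.integrableOn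
    Measure.integrable_toReal_rnDeriv.integrableOn, Measure.setIntegral_toReal_rnDeriv hμξ,
    Measure.setIntegral_toReal_rnDeriv hνξ]

end SignedDensity

section TotalVariation

variable {Ω : Type*} [MeasurableSpace Ω] {μ ν : Measure Ω}

lemma sub_le_tvDist [IsFiniteMeasure μ] [IsFiniteMeasure ν] {s : Set Ω} (hs : MeasurableSet s) :
    μ.real s - ν.real s ≤ tvDist μ ν := by
  have hbdd : BddAbove (Set.range fun s : {s : Set Ω // MeasurableSet s} =>
      |(μ s.1).toReal - (ν s.1).toReal|) := by
    refine ⟨μ.real Set.univ + ν.real Set.univ, ?_⟩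
    rintro _ ⟨t, rfl⟩
    exact (abs_sub _ _).trans (add_le_add
      ((abs_of_nonneg measureReal_nonneg).trans_le (measureReal_mono (Set.subset_univ _)))
      ((abs_of_nonneg measureReal_nonneg).trans_le (measureReal_mono (Set.subset_univ _))))
  exact (le_abs_self _).trans (le_ciSup hbdd ⟨s, hs⟩)

variable [IsProbabilityMeasure μ] [IsProbabilityMeasure ν]

lemma integral_abs_signedDensity_le : ∫ x, |signedDensity μ ν x| ∂(μ + ν) ≤ 2 * tvDist μ ν := by
  set A := {x | 0 ≤ signedDensity μ ν x}
  have hA : MeasurableSet A := measurableSet_le measurable_const measurable_signedDensity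
  have hsplit : ∫ x, |signedDensity μ ν x| ∂(μ + ν) =
      ∫ x in A, signedDensity μ ν x ∂(μ + ν) - ∫ x in Aᶜ, signedDensity μ ν x ∂(μ + ν) := by
    rw [← integral_add_compl hA integrable_signedDensity.abs, sub_eq_add_neg, ← integral_neg,
      setIntegral_congr_fun hA fun x hx => abs_of_nonneg hx,
      setIntegral_congr_fun hA.compl fun x hx =>
        abs_of_neg (not_le.1 (Set.notMem_ofPred_iff.1 hx))]
  rw [hsplit, setIntegral_signedDensity, setIntegral_signedDensity, probReal_compl_eq_one_sub hA,
    probReal_compl_eq_one_sub hA]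
  linarith [sub_le_tvDist (μ := μ) (ν := ν) hA]

lemma integral_sq_signedDensity_le : ∫ x, signedDensity μ ν x ^ 2 ∂(μ + ν) ≤ 2 * tvDist μ ν := by
  refine (integral_mono_ae ?_ integrable_signedDensity.abs ?_).trans integral_abs_signedDensity_le
  · exact (integrable_const 1).mono' (measurable_signedDensity.pow_const 2).aestronglyMeasurable
      (by filter_upwards [abs_signedDensity_le_one] with x hx
          simpa [abs_pow] using pow_le_one₀ (n := 2) (abs_nonneg _) hx)
  · filter_upwards [abs_signedDensity_le_one] with x hx
    rw [← sq_abs]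
    nlinarith [abs_nonneg (signedDensity μ ν x)]

theorem abs_integral_sub_integral_le_tvDist {h Q : Ω → ℝ} (hhμ : Integrable h μ)
    (hhν : Integrable h ν) (hQμ : MemLp Q 2 μ) (hQν : MemLp Q 2 ν) (hhQ : ∀ x, |h x| ≤ |Q x|) :
    |∫ x, h x ∂μ - ∫ x, h x ∂ν| ≤
      2 * √(∫ x, Q x ^ 2 ∂μ + ∫ x, Q x ^ 2 ∂ν) * √(tvDist μ ν) := by
  have hh_sq_le : ∀ x, h x ^ 2 ≤ Q x ^ 2 := fun x => sq_le_sq.2 (hhQ x)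
  have hQ2 : Integrable (fun x => Q x ^ 2) (μ + ν) :=
    hQμ.integrable_sq.add_measure hQν.integrable_sq
  have hh_meas : AEStronglyMeasurable h (μ + ν) := hhμ.1.add_measure hhν.1
  have hh : MemLp h 2 (μ + ν) := (memLp_two_iff_integrable_sq hh_meas).2 <|
    hQ2.mono' (hh_meas.pow 2) (Filter.Eventually.of_forall fun x => by
      simpa only [Real.norm_eq_abs, abs_pow, sq_abs] using hh_sq_le x)
  have hd : MemLp (signedDensity μ ν) 2 (μ + ν) :=
    MemLp.of_bound measurable_signedDensity.aestronglyMeasurable 1 abs_signedDensity_le_one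
  have hh2 : ∫ x, h x ^ 2 ∂(μ + ν) ≤ ∫ x, Q x ^ 2 ∂μ + ∫ x, Q x ^ 2 ∂ν := by
    rw [← integral_add_measure hQμ.integrable_sq hQν.integrable_sq]
    exact integral_mono hh.integrable_sq hQ2 hh_sq_le
  have hsqrt_two : √(2 * tvDist μ ν) ≤ 2 * √(tvDist μ ν) := by
    rw [Real.sqrt_mul zero_le_two]
    gcongr
    nlinarith [Real.sq_sqrt (zero_le_two (α := ℝ)), Real.sqrt_nonneg 2]
  calc |∫ x, h x ∂μ - ∫ x, h x ∂ν|
      = |∫ x, signedDensity μ ν x * h x ∂(μ + ν)| := by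
        rw [integral_sub_integral_eq_integral_signedDensity_mul hhμ hhν]
    _ ≤ ∫ x, |signedDensity μ ν x| * |h x| ∂(μ + ν) := by
        simpa only [abs_mul] using
          abs_integral_le_integral_abs (f := fun x => signedDensity μ ν x * h x)
    _ ≤ √(∫ x, signedDensity μ ν x ^ 2 ∂(μ + ν)) * √(∫ x, h x ^ 2 ∂(μ + ν)) :=
        integral_abs_mul_abs_le_sqrt_mul_sqrt hd hh
    _ ≤ √(2 * tvDist μ ν) * √(∫ x, Q x ^ 2 ∂μ + ∫ x, Q x ^ 2 ∂ν) := by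
        gcongr
        exact integral_sq_signedDensity_le
    _ ≤ 2 * √(∫ x, Q x ^ 2 ∂μ + ∫ x, Q x ^ 2 ∂ν) * √(tvDist μ ν) := by
        linarith [mul_le_mul_of_nonneg_right hsqrt_two (Real.sqrt_nonneg
          (∫ x, Q x ^ 2 ∂μ + ∫ x, Q x ^ 2 ∂ν))]

end TotalVariation

section Mixture

variable {Ω ι : Type*} [MeasurableSpace Ω] [Fintype ι] {νc : ι → Measure Ω} {w : ι → ℝ}

lemma integrable_sum_ofReal_smul_measure {F : Ω → ℝ} (hF : ∀ i, Integrable F (νc i)) :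
    Integrable F (∑ i, ENNReal.ofReal (w i) • νc i) :=
  integrable_finsetSum_measure.2 fun i _ => (hF i).smul_measure ENNReal.ofReal_ne_top

lemma integral_sum_ofReal_smul_measure (hw : ∀ i, 0 ≤ w i) {F : Ω → ℝ}
    (hF : ∀ i, Integrable F (νc i)) :
    ∫ x, F x ∂(∑ i, ENNReal.ofReal (w i) • νc i) = ∑ i, w i * ∫ x, F x ∂(νc i) := by
  rw [integral_finsetSum_measure fun i _ => (hF i).smul_measure ENNReal.ofReal_ne_top]
  simp only [integral_smul_measure, ENNReal.toReal_ofReal (hw _), smul_eq_mul]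

lemma isProbabilityMeasure_sum_ofReal_smul [∀ i, IsProbabilityMeasure (νc i)]
    (hw : ∀ i, 0 ≤ w i) (hw1 : ∑ i, w i = 1) :
    IsProbabilityMeasure (∑ i, ENNReal.ofReal (w i) • νc i) := by
  constructor
  simp only [Measure.coe_finsetSum, Finset.sum_apply, Measure.smul_apply, measure_univ,
    smul_eq_mul, mul_one]
  rw [← ENNReal.ofReal_sum_of_nonneg fun i _ => hw i, hw1, ENNReal.ofReal_one]

end Mixture

section PositivePart

variable {Ω : Type*} [MeasurableSpace Ω] {μ ν : Measure Ω}

lemma abs_integral_posPart_sub_le_tvDist [IsProbabilityMeasure μ] [IsProbabilityMeasure ν]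
    {Q : Ω → ℝ} (hQμ : MemLp Q 2 μ) (hQν : MemLp Q 2 ν) (t : ℝ) :
    |∫ x, max (Q x - t) 0 ∂μ - ∫ x, max (Q x - t) 0 ∂ν| ≤
      2 * √(∫ x, Q x ^ 2 ∂μ + ∫ x, Q x ^ 2 ∂ν) * √(tvDist μ ν) := by
  have hposμ : Integrable (fun x => max (Q x - t) 0) μ :=
    ((hQμ.integrable one_le_two).sub (integrable_const t)).pos_part
  have hposν : Integrable (fun x => max (Q x - t) 0) ν :=
    ((hQν.integrable one_le_two).sub (integrable_const t)).pos_part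
  -- Shifting by the constant `(-t)⁺` leaves the difference unchanged and makes the integrand
  -- dominated by `|Q|`.
  have hshift := abs_integral_sub_integral_le_tvDist (h := fun x => max (Q x - t) 0 - max (-t) 0)
    (hposμ.sub (integrable_const _)) (hposν.sub (integrable_const _)) hQμ hQν
    fun x => by simpa using abs_max_sub_max_le_abs (Q x - t) (-t) 0
  simpa only [integral_sub hposμ (integrable_const _), integral_sub hposν (integrable_const _),
    integral_const, probReal_univ, one_smul, sub_sub_sub_cancel_right] using hshift

lemma abs_integral_posPart_sub_integral_posPart_le [IsFiniteMeasure μ] {X Y : Ω → ℝ}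
    (hX : Integrable X μ) (hY : Integrable Y μ) (t : ℝ) :
    |∫ x, max (X x - t) 0 ∂μ - ∫ x, max (Y x - t) 0 ∂μ| ≤ ∫ x, |X x - Y x| ∂μ := by
  have hXt : Integrable (fun x => max (X x - t) 0) μ := (hX.sub (integrable_const t)).pos_part
  have hYt : Integrable (fun x => max (Y x - t) 0) μ := (hY.sub (integrable_const t)).pos_part
  rw [← integral_sub hXt hYt]
  refine abs_integral_le_integral_abs.trans
    (integral_mono (hXt.sub hYt).abs (hX.sub hY).abs fun x => ?_)
  simpa using abs_max_sub_max_le_abs (X x - t) (Y x - t) 0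

lemma abs_integral_posPart_sub_mixture_le {ι : Type*} [Fintype ι] [IsProbabilityMeasure ν]
    {νc : ι → Measure Ω} [∀ i, IsProbabilityMeasure (νc i)] {w : ι → ℝ} (hw : ∀ i, 0 ≤ w i)
    (hw1 : ∑ i, w i = 1) {Q : Ω → ℝ} {Qs : ι → Ω → ℝ} (hQ : MemLp Q 2 ν)
    (hQi : ∀ i, MemLp Q 2 (νc i)) (hQs : ∀ i, Integrable (Qs i) (νc i)) (t : ℝ) :
    |∫ x, max (Q x - t) 0 ∂ν - ∑ i, w i * ∫ x, max (Qs i x - t) 0 ∂(νc i)| ≤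
      2 * √(∫ x, Q x ^ 2 ∂ν + ∑ i, w i * ∫ x, Q x ^ 2 ∂(νc i)) *
          √(tvDist ν (∑ i, ENNReal.ofReal (w i) • νc i)) +
        ∑ i, w i * ∫ x, |Q x - Qs i x| ∂(νc i) := by
  have := isProbabilityMeasure_sum_ofReal_smul (νc := νc) hw hw1
  have hQint : ∀ i, Integrable Q (νc i) := fun i => (hQi i).integrable one_le_two
  have hQ2 : ∀ i, Integrable (fun x => Q x ^ 2) (νc i) := fun i => (hQi i).integrable_sq
  have hpos : ∀ i, Integrable (fun x => max (Q x - t) 0) (νc i) :=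
    fun i => ((hQint i).sub (integrable_const t)).pos_part
  have hQmix : MemLp Q 2 (∑ i, ENNReal.ofReal (w i) • νc i) :=
    (memLp_two_iff_integrable_sq (integrable_sum_ofReal_smul_measure hQint).1).2
      (integrable_sum_ofReal_smul_measure hQ2)
  have hmeasure := abs_integral_posPart_sub_le_tvDist hQ hQmix t
  rw [integral_sum_ofReal_smul_measure hw hQ2, integral_sum_ofReal_smul_measure hw hpos]
    at hmeasure
  have hintegrand : |∑ i, w i * (∫ x, max (Q x - t) 0 ∂(νc i) -
      ∫ x, max (Qs i x - t) 0 ∂(νc i))| ≤ ∑ i, w i * ∫ x, |Q x - Qs i x| ∂(νc i) := by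
    refine (Finset.abs_sum_le_sum_abs _ _).trans (Finset.sum_le_sum fun i _ => ?_)
    rw [abs_mul, abs_of_nonneg (hw i)]
    exact mul_le_mul_of_nonneg_left
      (abs_integral_posPart_sub_integral_posPart_le (hQint i) (hQs i) t) (hw i)
  calc |∫ x, max (Q x - t) 0 ∂ν - ∑ i, w i * ∫ x, max (Qs i x - t) 0 ∂(νc i)|
      = |(∫ x, max (Q x - t) 0 ∂ν - ∑ i, w i * ∫ x, max (Q x - t) 0 ∂(νc i)) +
          ∑ i, w i * (∫ x, max (Q x - t) 0 ∂(νc i) - ∫ x, max (Qs i x - t) 0 ∂(νc i))| := by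
        simp only [mul_sub, Finset.sum_sub_distrib, sub_add_sub_cancel]
    _ ≤ _ := (abs_add_le _ _).trans (add_le_add hmeasure hintegrand)

end PositivePart

lemma abs_minimum_sub_minimum_le {β : Type*} {f g : β → ℝ} {t₀ t₁ : β} {B : ℝ}
    (hf : ∀ t, f t₀ ≤ f t) (hg : ∀ t, g t₁ ≤ g t) (hfg : ∀ t, |f t - g t| ≤ B) :
    |f t₀ - g t₁| ≤ B := by
  have h₀ := abs_le.1 (hfg t₀)
  have h₁ := abs_le.1 (hfg t₁)
  exact abs_le.2 ⟨by linarith [hg t₀], by linarith [hf t₁]⟩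

theorem mixture_taylor_cvar_error_general {α : Type*} [MeasurableSpace α]
    (a : ℝ) (ha : a ∈ Set.Ioo (0 : ℝ) 1)
    (ν : Measure α) [IsProbabilityMeasure ν] (N : ℕ)
    (νc : Fin N → Measure α) [∀ i, IsProbabilityMeasure (νc i)]
    (w : Fin N → ℝ) (hw : ∀ i, 0 ≤ w i) (hw1 : ∑ i, w i = 1)
    (Q : α → ℝ) (Qs : Fin N → α → ℝ)
    (hQ : MemLp Q 2 ν) (hQi : ∀ i, MemLp Q 2 (νc i))
    (hQs : ∀ i, Integrable (Qs i) (νc i))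
    (f g : ℝ → ℝ)
    (hf : f = fun t => t + (1 - a)⁻¹ * ∫ x, max (Q x - t) 0 ∂ν)
    (hg : g = fun t =>
      t + (1 - a)⁻¹ * ∑ i, w i * ∫ x, max (Qs i x - t) 0 ∂(νc i))
    (t₀ t₁ : ℝ) (ht₀ : ∀ t, f t₀ ≤ f t) (ht₁ : ∀ t, g t₁ ≤ g t) :
    |f t₀ - g t₁| ≤
      (1 - a)⁻¹ *
        (2 * Real.sqrt ((∫ x, Q x ^ 2 ∂ν) + ∑ i, w i * ∫ x, Q x ^ 2 ∂(νc i)) *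
            Real.sqrt (tvDist ν (∑ i, ENNReal.ofReal (w i) • νc i)) +
          ∑ i, w i * ∫ x, |Q x - Qs i x| ∂(νc i)) := by
  have hc : 0 ≤ (1 - a)⁻¹ := inv_nonneg.2 (sub_nonneg.2 ha.2.le)
  refine abs_minimum_sub_minimum_le ht₀ ht₁ fun t => ?_
  have hfg : f t - g t = (1 - a)⁻¹ *
      (∫ x, max (Q x - t) 0 ∂ν - ∑ i, w i * ∫ x, max (Qs i x - t) 0 ∂(νc i)) := by
    rw [hf, hg]
    ring
  rw [hfg, abs_mul, abs_of_nonneg hc]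
  exact mul_le_mul_of_nonneg_left (abs_integral_posPart_sub_mixture_le hw hw1 hQ hQi hQs t) hc

/-- Error bound for the mixture Taylor approximation of CVaR. Let
`f(t) = t + (1−α)⁻¹ E_ν[(Q−t)^+]` and
`g(t) = t + (1−α)⁻¹ ∑ᵢ wᵢ E_{νᵢ}[(Q_{s,i}−t)^+]`, and suppose both minima are attained,
at `t₀` and `t₁` respectively.  Then
`|f(t₀) − g(t₁)| ≤ (1−α)⁻¹ (2 (E_ν[Q²] + E_{ν_mix}[Q²])^{1/2} tv(ν, ν_mix)^{1/2}
  + ∑ᵢ wᵢ E_{νᵢ}[|Q − Q_{s,i}|])`. -/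
theorem mixture_taylor_cvar_error {α : Type*} [MeasurableSpace α]
    (a : ℝ) (ha : a ∈ Set.Ioo (0 : ℝ) 1)
    (ν : Measure α) [IsProbabilityMeasure ν] (N : ℕ)
    (νc : Fin N → Measure α) [∀ i, IsProbabilityMeasure (νc i)]
    (w : Fin N → ℝ) (hw : ∀ i, 0 ≤ w i) (hw1 : ∑ i, w i = 1)
    (Q : α → ℝ) (Qs : Fin N → α → ℝ)
    (hQ : MemLp Q 2 ν) (hQi : ∀ i, MemLp Q 2 (νc i))
    (hQs : ∀ i, Integrable (Qs i) (νc i))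
    (hdiff : ∀ i, Integrable (fun x => |Q x - Qs i x|) (νc i))
    (f g : ℝ → ℝ)
    (hf : f = fun t => t + (1 - a)⁻¹ * ∫ x, max (Q x - t) 0 ∂ν)
    (hg : g = fun t =>
      t + (1 - a)⁻¹ * ∑ i, w i * ∫ x, max (Qs i x - t) 0 ∂(νc i))
    (t₀ t₁ : ℝ) (ht₀ : ∀ t, f t₀ ≤ f t) (ht₁ : ∀ t, g t₁ ≤ g t) :
    |f t₀ - g t₁| ≤
      (1 - a)⁻¹ *
        (2 * Real.sqrt ((∫ x, Q x ^ 2 ∂ν) + ∑ i, w i * ∫ x, Q x ^ 2 ∂(νc i)) *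
            Real.sqrt (tvDist ν (∑ i, ENNReal.ofReal (w i) • νc i)) +
          ∑ i, w i * ∫ x, |Q x - Qs i x| ∂(νc i)) :=
  mixture_taylor_cvar_error_general a ha ν N νc w hw hw1 Q Qs hQ hQi hQs f g hf hg t₀ t₁ ht₀ ht₁
end

section
/- Let m ~ N(m̄, C) be a Gaussian random vector on ℝⁿ with C symmetric positive definite, let c ∈ ℝ, g ∈ ℝⁿ, and let (λ_j, φ_j), j = 1, …, r (r ≤ n), satisfy the generalized eigenvalue relations A φ_j = λ_j C^{−1} φ_j for a symmetric matrix A, with C^{−1}-orthonormality ⟨φ_i, C^{−1} φ_j⟩ = δ_{ij}, and suppose ⟨g, C g⟩ − ∑_{j=1}^r ⟨g, φ_j⟩² ≥ 0. Then the random variable Q(m) = c + ⟨g, m − m̄⟩ + (1/2) ∑_{j=1}^r λ_j ⟨C^{−1} φ_j, m − m̄⟩² has the same distribution as c + (⟨g, C g⟩ − ∑_{j=1}^r ⟨g, φ_j⟩²)^{1/2} · y₀ + ∑_{j=1}^r ( ⟨g, φ_j⟩ y_j + (1/2) λ_j y_j² ), where y₀, y₁, …, y_r are independent standard normal random variables.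 -/
/-!
Write `m = m̄ + R x` with `R Rᵀ = C` and `x` standard normal. Then `Q(m) = G(K R x)`, where `K`
has rows `g, C⁻¹φ₀, …, C⁻¹φ_{r-1}` and `G z = c + z₀ + ½ ∑ⱼ λⱼ z_{j+1}²`, while the sampled
variable is `G(N y)` for the matrix `N` with rows `(s, ⟨g, φ₀⟩, …, ⟨g, φ_{r-1}⟩), e₁, …, e_r`,
where `s² = ⟨g, C g⟩ - ∑ⱼ ⟨g, φⱼ⟩²`. The law of `M x` for standard normal `x` depends only on
`M Mᵀ` (its characteristic function is `exp (-⟨t, M Mᵀ t⟩ / 2)`), and the `C⁻¹`-orthonormality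
of the `φⱼ` is exactly what makes `(K R)(K R)ᵀ = K C Kᵀ` equal to `N Nᵀ`.
-/

open MeasureTheory ProbabilityTheory Matrix
open scoped NNReal ENNReal

/-- The Gaussian measure `N(m, C)` on `ℝⁿ` with mean `m` and (positive semidefinite)
covariance matrix `C`, realized as the pushforward of the standard Gaussian under
`x ↦ m + C^{1/2} x` (junk value `0` if `C` is not positive semidefinite). -/
noncomputable def gaussianPi {n : ℕ} (m : Fin n → ℝ) (C : Matrix (Fin n) (Fin n) ℝ) :
    Measure (Fin n → ℝ) :=
  haveI := Classical.propDecidable C.PosSemidef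
  if h : C.PosSemidef then
    Measure.map (fun x => m + ((h.1.eigenvectorUnitary : Matrix (Fin n) (Fin n) ℝ) *
      diagonal (Real.sqrt ∘ h.1.eigenvalues) *
      (star h.1.eigenvectorUnitary : Matrix (Fin n) (Fin n) ℝ)).mulVec x) (Measure.pi fun _ => gaussianReal 0 1)
  else 0

open WithLp
open scoped RealInnerProductSpace

theorem Matrix.mul_mul_transpose_apply {ι κ α : Type*} [Fintype κ] [CommSemiring α]
    (A : Matrix ι κ α) (B : Matrix κ κ α) (i j : ι) : (A * B * Aᵀ) i j = A i ⬝ᵥ B *ᵥ A j := by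
  rw [Matrix.mul_assoc]
  simp [mul_apply, dotProduct, mulVec, Finset.mul_sum, mul_comm]

theorem Matrix.IsHermitian.mulVec_dotProduct {ι : Type*} [Fintype ι] {S : Matrix ι ι ℝ}
    (hS : S.IsHermitian) (u v : ι → ℝ) : S *ᵥ u ⬝ᵥ v = u ⬝ᵥ S *ᵥ v := by
  rw [dotProduct_mulVec, ← mulVec_transpose, ← conjTranspose_eq_transpose_of_trivial, hS.eq]

theorem charFun_map_toLp_map_mulVec_pi_gaussianReal {ι κ : Type*} [Fintype ι] [Fintype κ]
    (M : Matrix ι κ ℝ) (t : EuclideanSpace ℝ ι) :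
    charFun (((Measure.pi fun _ : κ => gaussianReal 0 1).map M.mulVec).map (toLp 2)) t
      = Complex.exp (-(ofLp t ⬝ᵥ (M * Mᵀ) *ᵥ ofLp t) / 2 : ℝ) := by
  have hinner (x : κ → ℝ) : ⟪toLp 2 (M *ᵥ x), t⟫ = ⟪toLp 2 x, toLp 2 (Mᵀ *ᵥ ofLp t)⟫ := by
    simp only [EuclideanSpace.inner_eq_star_dotProduct, star_trivial, mulVec_transpose,
      dotProduct_mulVec]
  have hnorm : ‖toLp 2 (Mᵀ *ᵥ ofLp t)‖ ^ 2 = ofLp t ⬝ᵥ (M * Mᵀ) *ᵥ ofLp t := by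
    rw [← real_inner_self_eq_norm_sq, EuclideanSpace.inner_eq_star_dotProduct, star_trivial,
      ← mulVec_mulVec, dotProduct_mulVec, vecMul_transpose, dotProduct_comm]
  rw [Measure.map_map (by fun_prop) (by fun_prop), charFun_apply,
    integral_map (by fun_prop) (by fun_prop)]
  simp_rw [Function.comp_apply, hinner]
  rw [← integral_map (f := fun y => Complex.exp (⟪y, toLp 2 (Mᵀ *ᵥ ofLp t)⟫ * Complex.I))
    (by fun_prop) (by fun_prop), ← charFun_apply, map_pi_eq_stdGaussian, charFun_stdGaussian,
    ← hnorm]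
  push_cast
  rfl

theorem map_mulVec_pi_gaussianReal_eq_of_mul_transpose_eq {ι κ κ' : Type*} [Fintype ι]
    [Fintype κ] [Fintype κ'] {M : Matrix ι κ ℝ} {N : Matrix ι κ' ℝ} (h : M * Mᵀ = N * Nᵀ) :
    (Measure.pi fun _ : κ => gaussianReal 0 1).map M.mulVec
      = (Measure.pi fun _ : κ' => gaussianReal 0 1).map N.mulVec := by
  refine (MeasurableEquiv.toLp 2 (ι → ℝ)).map_measurableEquiv_injective
    (Measure.ext_of_charFun (funext fun t => ?_))
  simp only [MeasurableEquiv.coe_toLp, charFun_map_toLp_map_mulVec_pi_gaussianReal, h]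

theorem gaussianPi_eq_map_add_mulVec {n : ℕ} (m : Fin n → ℝ) {C : Matrix (Fin n) (Fin n) ℝ}
    (hC : C.PosSemidef) :
    ∃ R : Matrix (Fin n) (Fin n) ℝ, R * Rᵀ = C ∧
      gaussianPi m C = (Measure.pi fun _ => gaussianReal 0 1).map (fun x => m + R *ᵥ x) := by
  refine ⟨cfc Real.sqrt C, ?_, ?_⟩
  · have hspec : ∀ x ∈ spectrum ℝ C, Real.sqrt x * Real.sqrt x = x := fun x hx =>
      Real.mul_self_sqrt ((posSemidef_iff_isHermitian_and_spectrum_nonneg.1 hC).2 hx)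
    rw [← conjTranspose_eq_transpose_of_trivial, ← star_eq_conjTranspose,
      (cfc_predicate Real.sqrt C).star_eq, ← cfc_mul .., cfc_congr hspec]
    exact cfc_id' ℝ C hC.isHermitian
  · rw [gaussianPi, dif_pos hC, hC.isHermitian.cfc_eq]
    rfl

theorem map_mulVec_sub_gaussianPi {n : ℕ} {ι κ : Type*} [Fintype ι] [Fintype κ]
    (m : Fin n → ℝ) {C : Matrix (Fin n) (Fin n) ℝ} (hC : C.PosSemidef) (K : Matrix ι (Fin n) ℝ)
    {M : Matrix ι κ ℝ} (h : M * Mᵀ = K * C * Kᵀ) :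
    (gaussianPi m C).map (fun x => K *ᵥ (x - m))
      = (Measure.pi fun _ : κ => gaussianReal 0 1).map M.mulVec := by
  obtain ⟨R, hRR, hR⟩ := gaussianPi_eq_map_add_mulVec m hC
  have hKR : (fun x => K *ᵥ (x - m)) ∘ (fun x => m + R *ᵥ x) = (K * R).mulVec := by
    funext x
    simp [mulVec_mulVec]
  rw [hR, Measure.map_map (by fun_prop) (by fun_prop), hKR]
  refine map_mulVec_pi_gaussianReal_eq_of_mul_transpose_eq ?_
  rw [transpose_mul, Matrix.mul_assoc, ← Matrix.mul_assoc R, hRR, h, Matrix.mul_assoc]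

noncomputable def formsMatrix {n r : ℕ} (C : Matrix (Fin n) (Fin n) ℝ) (g : Fin n → ℝ)
    (φ : Fin r → Fin n → ℝ) : Matrix (Fin (r + 1)) (Fin n) ℝ :=
  of (Fin.cons g fun j => C⁻¹ *ᵥ φ j)

def samplingMatrix {r : ℕ} (s : ℝ) (a : Fin r → ℝ) : Matrix (Fin (r + 1)) (Fin (r + 1)) ℝ :=
  of (Fin.cons (Fin.cons s a) fun j => Pi.single j.succ 1)

section rows

variable {n r : ℕ} (C : Matrix (Fin n) (Fin n) ℝ) (g : Fin n → ℝ) (φ : Fin r → Fin n → ℝ)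
  (s : ℝ) (a : Fin r → ℝ) (j : Fin r)

@[simp] theorem formsMatrix_zero : formsMatrix C g φ 0 = g := rfl

@[simp] theorem formsMatrix_succ : formsMatrix C g φ j.succ = C⁻¹ *ᵥ φ j := rfl

@[simp] theorem samplingMatrix_zero : samplingMatrix s a 0 = Fin.cons s a := rfl

@[simp] theorem samplingMatrix_succ : samplingMatrix s a j.succ = Pi.single j.succ 1 := rfl

end rows

theorem samplingMatrix_mul_transpose {n r : ℕ} {C : Matrix (Fin n) (Fin n) ℝ} (hC : C.PosDef)
    (g : Fin n → ℝ) {φ : Fin r → Fin n → ℝ}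
    (horth : ∀ i j, φ i ⬝ᵥ C⁻¹ *ᵥ φ j = if i = j then 1 else 0) {s : ℝ}
    (hs : s ^ 2 = g ⬝ᵥ C *ᵥ g - ∑ j, (g ⬝ᵥ φ j) ^ 2) :
    samplingMatrix s (fun j => g ⬝ᵥ φ j) * (samplingMatrix s fun j => g ⬝ᵥ φ j)ᵀ
      = formsMatrix C g φ * C * (formsMatrix C g φ)ᵀ := by
  have hCC : C * C⁻¹ = 1 := mul_nonsing_inv C (isUnit_iff_isUnit_det C |>.1 hC.isUnit)
  ext i j
  rw [mul_apply', mul_mul_transpose_apply]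
  induction i using Fin.cases <;> induction j using Fin.cases
  case zero.zero =>
    simp only [samplingMatrix_zero, formsMatrix_zero, transpose_apply]
    rw [← vecCons, cons_dotProduct_cons, ← sq, hs]
    simp [dotProduct, sq]
  case zero.succ j => simp [hCC]
  case succ.zero i => simp [hC.isHermitian.mulVec_dotProduct, dotProduct_comm, mulVec_mulVec, hCC]
  case succ.succ i j => simp [hCC, dotProduct_comm _ (φ j), horth, Pi.single_apply, eq_comm]

theorem lowrank_quadratic_sampling_general {n r : ℕ} (mbar : Fin n → ℝ)
    (C : Matrix (Fin n) (Fin n) ℝ) (hC : C.PosDef)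
    (c : ℝ) (g : Fin n → ℝ) (lam : Fin r → ℝ) (φ : Fin r → Fin n → ℝ)
    (horth : ∀ i j, φ i ⬝ᵥ C⁻¹.mulVec (φ j) = if i = j then (1 : ℝ) else 0)
    (hnn : 0 ≤ g ⬝ᵥ C.mulVec g - ∑ j, (g ⬝ᵥ φ j) ^ 2) :
    Measure.map
      (fun m : Fin n → ℝ =>
        c + g ⬝ᵥ (m - mbar) +
          (1 / 2) * ∑ j, lam j * (C⁻¹.mulVec (φ j) ⬝ᵥ (m - mbar)) ^ 2)
      (gaussianPi mbar C) =
    Measure.map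
      (fun y : Fin (r + 1) → ℝ =>
        c + Real.sqrt (g ⬝ᵥ C.mulVec g - ∑ j, (g ⬝ᵥ φ j) ^ 2) * y 0 +
          ∑ j : Fin r, ((g ⬝ᵥ φ j) * y j.succ + (1 / 2) * lam j * (y j.succ) ^ 2))
      (Measure.pi fun _ : Fin (r + 1) => gaussianReal 0 1) := by
  set s := Real.sqrt (g ⬝ᵥ C.mulVec g - ∑ j, (g ⬝ᵥ φ j) ^ 2)
  let K := formsMatrix C g φ
  let N := samplingMatrix s fun j => g ⬝ᵥ φ j
  let G : (Fin (r + 1) → ℝ) → ℝ := fun z => c + z 0 + (1 / 2) * ∑ j, lam j * z j.succ ^ 2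
  have hQ : (fun m : Fin n → ℝ => c + g ⬝ᵥ (m - mbar) +
      (1 / 2) * ∑ j, lam j * (C⁻¹.mulVec (φ j) ⬝ᵥ (m - mbar)) ^ 2)
      = G ∘ fun m => K *ᵥ (m - mbar) := by
    funext m
    simp [G, K, mulVec_apply, row]
  have hY : (fun y : Fin (r + 1) → ℝ => c + s * y 0 +
      ∑ j : Fin r, ((g ⬝ᵥ φ j) * y j.succ + (1 / 2) * lam j * (y j.succ) ^ 2))
      = G ∘ N.mulVec := by
    funext y
    simp only [Function.comp_apply, G, N, mulVec_apply, row, samplingMatrix_zero,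
      samplingMatrix_succ, single_dotProduct, one_mul]
    rw [← Matrix.vecCons, cons_dotProduct, Finset.sum_add_distrib, Finset.mul_sum]
    simp only [vecHead, vecTail, Function.comp_def, mul_assoc, add_assoc, dotProduct]
  have hgram : N * Nᵀ = K * C * Kᵀ :=
    samplingMatrix_mul_transpose hC g horth (Real.sq_sqrt hnn)
  rw [hQ, hY, ← Measure.map_map (by fun_prop) (by fun_prop),
    ← Measure.map_map (by fun_prop) (by fun_prop),
    map_mulVec_sub_gaussianPi mbar hC.posSemidef K hgram]

/-- Distributional representation of the (low-rank) quadratic form of a Gaussian vector: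
for `m ~ N(m̄, C)` and generalized eigenpairs `A φ_j = λ_j C⁻¹ φ_j` with
`⟨φ_i, C⁻¹ φ_j⟩ = δ_{ij}`, the random variable
`Q(m) = c + ⟨g, m − m̄⟩ + ½ ∑_j λ_j ⟨C⁻¹φ_j, m − m̄⟩²`
has the same law as
`c + (⟨g, Cg⟩ − ∑_j ⟨g, φ_j⟩²)^{1/2} y₀ + ∑_j (⟨g, φ_j⟩ y_j + ½ λ_j y_j²)`
where `y₀, y₁, …, y_r` are i.i.d. standard normal. -/
theorem lowrank_quadratic_sampling {n r : ℕ} (hr : r ≤ n) (mbar : Fin n → ℝ)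
    (C : Matrix (Fin n) (Fin n) ℝ) (hC : C.PosDef)
    (A : Matrix (Fin n) (Fin n) ℝ) (hA : A.IsSymm)
    (c : ℝ) (g : Fin n → ℝ) (lam : Fin r → ℝ) (φ : Fin r → Fin n → ℝ)
    (heig : ∀ j, A.mulVec (φ j) = lam j • C⁻¹.mulVec (φ j))
    (horth : ∀ i j, φ i ⬝ᵥ C⁻¹.mulVec (φ j) = if i = j then (1 : ℝ) else 0)
    (hnn : 0 ≤ g ⬝ᵥ C.mulVec g - ∑ j, (g ⬝ᵥ φ j) ^ 2) :
    Measure.map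
      (fun m : Fin n → ℝ =>
        c + g ⬝ᵥ (m - mbar) +
          (1 / 2) * ∑ j, lam j * (C⁻¹.mulVec (φ j) ⬝ᵥ (m - mbar)) ^ 2)
      (gaussianPi mbar C) =
    Measure.map
      (fun y : Fin (r + 1) → ℝ =>
        c + Real.sqrt (g ⬝ᵥ C.mulVec g - ∑ j, (g ⬝ᵥ φ j) ^ 2) * y 0 +
          ∑ j : Fin r, ((g ⬝ᵥ φ j) * y j.succ + (1 / 2) * lam j * (y j.succ) ^ 2))
      (Measure.pi fun _ : Fin (r + 1) => gaussianReal 0 1) :=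
  lowrank_quadratic_sampling_general mbar C hC c g lam φ horth hnn
end

section
/- Let (λ_k)_{k≥1} be a nonincreasing summable sequence of nonnegative reals (λ_1 ≥ λ_2 ≥ … ≥ 0 with ∑_k λ_k < ∞) and let σ ∈ [0, 1]. Then ( ∑_{k=1}^∞ λ_k )^{3/2} − ( σ² λ_1 + ∑_{k=2}^∞ λ_k )^{3/2} ≥ (1 − σ²) λ_1^{3/2}. -/
/-!
Write `L = λ₁` and `T = ∑_{k≥2} λ_k`. For `p ≥ 1` and `0 ≤ b ≤ a` one has
`a^p - b^p ≥ a^(p-1) (a - b)`, since `b^p = b^(p-1) b ≤ a^(p-1) b`. With `a = L + T`,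
`b = σ² L + T` this gives `(L + T)^p - (σ² L + T)^p ≥ (L + T)^(p-1) (1 - σ²) L`, and
`(L + T)^(p-1) ≥ L^(p-1)`.
-/

namespace Real

theorem rpow_sub_one_mul_sub_le_rpow_sub_rpow {p a b : ℝ} (hp : 1 ≤ p) (hb : 0 ≤ b)
    (hba : b ≤ a) : a ^ (p - 1) * (a - b) ≤ a ^ p - b ^ p := by
  have hp1 : p - 1 + 1 ≠ 0 := by linarith
  have hsplit : ∀ x : ℝ, 0 ≤ x → x ^ p = x ^ (p - 1) * x := fun x hx => by
    simpa using rpow_add_one' hx hp1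
  have hmono : b ^ (p - 1) ≤ a ^ (p - 1) := rpow_le_rpow hb hba (by linarith)
  rw [hsplit a (hb.trans hba), hsplit b hb]
  nlinarith

theorem mul_rpow_le_add_rpow_sub_add_rpow {p s L T : ℝ} (hp : 1 ≤ p) (hs₀ : 0 ≤ s)
    (hs₁ : s ≤ 1) (hL : 0 ≤ L) (hT : 0 ≤ T) :
    (1 - s) * L ^ p ≤ (L + T) ^ p - (s * L + T) ^ p :=
  calc (1 - s) * L ^ p = L ^ (p - 1) * ((1 - s) * L) := by
        rw [mul_left_comm, ← rpow_add_one' hL (by linarith), sub_add_cancel]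
    _ ≤ (L + T) ^ (p - 1) * ((1 - s) * L) := by
        gcongr
        linarith
    _ = (L + T) ^ (p - 1) * ((L + T) - (s * L + T)) := by ring
    _ ≤ (L + T) ^ p - (s * L + T) ^ p :=
        rpow_sub_one_mul_sub_le_rpow_sub_rpow hp (by positivity) (by nlinarith)

end Real

/-- `lam i` is the paper's `λ_{i+1}`. -/
theorem trace_rpow_reduction_general (lam : ℕ → ℝ) (hnonneg : ∀ k, 0 ≤ lam k)
    (hsum : Summable lam)
    (σ : ℝ) (hσ : σ ∈ Set.Icc (0 : ℝ) 1) :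
    (1 - σ ^ 2) * lam 0 ^ (3 / 2 : ℝ) ≤
      (∑' k, lam k) ^ (3 / 2 : ℝ) -
        (σ ^ 2 * lam 0 + ∑' k, lam (k + 1)) ^ (3 / 2 : ℝ) := by
  rw [hsum.tsum_eq_zero_add]
  exact Real.mul_rpow_le_add_rpow_sub_add_rpow (by norm_num) (sq_nonneg σ)
    (pow_le_one₀ hσ.1 hσ.2) (hnonneg 0) (tsum_nonneg fun k => hnonneg (k + 1))

/-- Reduction of `tr(C)^{3/2}` under the one-dimensional mixture decomposition along the
dominant eigendirection: for a nonincreasing summable sequence `λ_1 ≥ λ_2 ≥ … ≥ 0` and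
`σ ∈ [0,1]`,
`(∑_{k≥1} λ_k)^{3/2} − (σ² λ_1 + ∑_{k≥2} λ_k)^{3/2} ≥ (1 − σ²) λ_1^{3/2}`.
(Here `lam i` denotes `λ_{i+1}`.) -/
theorem trace_rpow_reduction (lam : ℕ → ℝ) (hnonneg : ∀ k, 0 ≤ lam k)
    (hmono : ∀ k, lam (k + 1) ≤ lam k) (hsum : Summable lam)
    (σ : ℝ) (hσ : σ ∈ Set.Icc (0 : ℝ) 1) :
    (1 - σ ^ 2) * lam 0 ^ (3 / 2 : ℝ) ≤
      (∑' k, lam k) ^ (3 / 2 : ℝ) -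
        (σ ^ 2 * lam 0 + ∑' k, lam (k + 1)) ^ (3 / 2 : ℝ) :=
  trace_rpow_reduction_general lam hnonneg hsum σ hσ
end
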